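/- arXiv:2407.02583 — 3 statements merged into one kernel-verified Lean document; each statement's English description precedes it below -/
import Mathlib

section
/- With K = diag(0,…,k_l,…,0) and k_{l,min} = σ²/ξ_l², it holds that MSE(β̂(k_{l,min})) < MSE(β̂), where MSE(β̂) = σ² Σ_{j=1}^{p} 1/λ_j is the OLS mean squared error; equivalently, (ξ_l⁴λ_l + σ²ξ_l²)/(ξ_l²λ_l + σ²)² < 1/λ_l. -/
theorem stmt9 (p : ℕ) (σ2 : ℝ) (lam : Fin p → ℝ) (l : Fin p) (ξl : ℝ)
    (hσ : 0 < σ2) (hlam : ∀ j, 0 < lam j) (hξ : ξl ≠ 0) :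
    (σ2 * lam l + (σ2 / ξl ^ 2) ^ 2 * ξl ^ 2) / (lam l + σ2 / ξl ^ 2) ^ 2 +
        σ2 * ∑ j ∈ Finset.univ.erase l, 1 / lam j < σ2 * ∑ j, 1 / lam j ∧
      (ξl ^ 4 * lam l + σ2 * ξl ^ 2) / (ξl ^ 2 * lam l + σ2) ^ 2 < 1 / lam l := by
  have hξ2 : (0:ℝ) < ξl ^ 2 := by positivity
  have hll : 0 < lam l := hlam l
  have hc : (0:ℝ) < σ2 / ξl ^ 2 := by positivity
  set c := σ2 / ξl ^ 2 with hcdef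
  have hnum : σ2 * lam l + c ^ 2 * ξl ^ 2 = σ2 * (lam l + c) := by
    rw [hcdef]; field_simp
  have hfrac : (σ2 * lam l + c ^ 2 * ξl ^ 2) / (lam l + c) ^ 2 = σ2 / (lam l + c) := by
    rw [hnum]
    have hne : (lam l + c) ≠ 0 := ne_of_gt (by linarith)
    field_simp
  constructor
  · have hsum : σ2 * ∑ j, 1 / lam j
        = σ2 * (1 / lam l) + σ2 * ∑ j ∈ Finset.univ.erase l, 1 / lam j := by
      rw [← Finset.add_sum_erase _ _ (Finset.mem_univ l), mul_add]
    rw [hsum, hfrac]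
    have : σ2 / (lam l + c) < σ2 / lam l :=
      div_lt_div_of_pos_left hσ hll (by linarith)
    rw [mul_one_div]
    linarith
  · have hd : (0:ℝ) < ξl ^ 2 * lam l + σ2 := by positivity
    rw [div_lt_div_iff₀ (by positivity) hll]
    have h1 : ξl ^ 4 * lam l + σ2 * ξl ^ 2 = ξl ^ 2 * (ξl ^ 2 * lam l + σ2) := by ring
    rw [h1, pow_two]
    have : ξl ^ 2 * lam l < ξl ^ 2 * lam l + σ2 := by linarith
    nlinarith
end

section
/- For the regular ridge estimator, MSE(β̂(k)) = Σ_{j=1}^{p} (σ²λ_j + k²ξ_j²)/(λ_j+k)² is strictly less than the OLS value σ² Σ_{j=1}^{p} 1/λ_j whenever 0 < k < σ²/ξ_max², where ξ_max² = max_j ξ_j². -/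
theorem stmt11 (p : ℕ) (σ2 : ℝ) (lam ξ : Fin p → ℝ) (ξmax2 k : ℝ)
    (hσ : 0 < σ2) (hlam : ∀ j, 0 < lam j) (hξ : ξ ≠ 0)
    (hmax : IsGreatest (Set.range fun j => ξ j ^ 2) ξmax2)
    (hk0 : 0 < k) (hk : k < σ2 / ξmax2) :
    ∑ j, (σ2 * lam j + k ^ 2 * ξ j ^ 2) / (lam j + k) ^ 2 <
      σ2 * ∑ j, 1 / lam j := by
  obtain ⟨j0, hj0⟩ := Function.ne_iff.mp hξ
  have hj0' : ξ j0 ≠ 0 := hj0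
  have hmaxpos : 0 < ξmax2 :=
    lt_of_lt_of_le (lt_of_le_of_ne (sq_nonneg _) (Ne.symm (pow_ne_zero 2 hj0'))) (hmax.2 ⟨j0, rfl⟩)
  have hkm : k * ξmax2 < σ2 := (lt_div_iff₀ hmaxpos).mp hk
  rw [Finset.mul_sum]
  refine Finset.sum_lt_sum_of_nonempty ⟨j0, Finset.mem_univ j0⟩ fun j _ => ?_
  have hl := hlam j
  have hlk : 0 < lam j + k := by linarith
  have hξj : ξ j ^ 2 ≤ ξmax2 := hmax.2 ⟨j, rfl⟩
  rw [mul_one_div, div_lt_div_iff₀ (by positivity) hl]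
  have h1 : k * (ξ j ^ 2) ≤ k * ξmax2 := by nlinarith
  nlinarith [sq_nonneg k, mul_pos hk0 hl, mul_pos hσ hl, mul_pos (mul_pos hσ hl) hk0]
end

section
/- The explained sum of squares of the generalized ridge regression satisfies β̂(K)ᵗ(XᵗX + 2ΓKΓᵗ)β̂(K) = Σ_{j=1}^{p} δ_j²(λ_j + 2k_j)/(λ_j + k_j)², where δ = ΓᵗXᵗY; consequently GoF(K) = (1/YᵗY) Σ_{j=1}^{p} δ_j²(λ_j+2k_j)/(λ_j+k_j)² tends to 0 as all k_j → +∞. -/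
open Matrix Filter

theorem stmt13 (n p : ℕ) (X : Matrix (Fin n) (Fin p) ℝ) (Y : Fin n → ℝ)
    (Γ : Matrix (Fin p) (Fin p) ℝ) (lam : Fin p → ℝ)
    (hY : 0 < Y ⬝ᵥ Y)
    (hpd : (Xᵀ * X).PosDef)
    (hΓ : Γ * Γᵀ = 1) (hΓ' : Γᵀ * Γ = 1)
    (hdec : Xᵀ * X = Γ * Matrix.diagonal lam * Γᵀ)
    (hlam : ∀ j, 0 < lam j)
    (δ : Fin p → ℝ) (hδ : δ = Γᵀ *ᵥ (Xᵀ *ᵥ Y))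
    (betaK : (Fin p → ℝ) → (Fin p → ℝ))
    (hbetaK : ∀ k, betaK k = (Xᵀ * X + Γ * Matrix.diagonal k * Γᵀ)⁻¹ *ᵥ (Xᵀ *ᵥ Y)) :
    (∀ k : Fin p → ℝ, (∀ j, 0 ≤ k j) →
        betaK k ⬝ᵥ ((Xᵀ * X + (2 : ℝ) • (Γ * Matrix.diagonal k * Γᵀ)) *ᵥ betaK k) =
          ∑ j, δ j ^ 2 * (lam j + 2 * k j) / (lam j + k j) ^ 2) ∧
    Tendsto (fun k : Fin p → ℝ =>
        (∑ j, δ j ^ 2 * (lam j + 2 * k j) / (lam j + k j) ^ 2) / (Y ⬝ᵥ Y))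
      atTop (nhds 0) := by
  constructor
  · intro k hk
    have hpos : ∀ j, 0 < lam j + k j := fun j => by
      have := hlam j; have := hk j; linarith
    have hne : ∀ j, lam j + k j ≠ 0 := fun j => (hpos j).ne'
    set D : Matrix (Fin p) (Fin p) ℝ := Matrix.diagonal (fun j => lam j + k j) with hD
    set D' : Matrix (Fin p) (Fin p) ℝ := Matrix.diagonal (fun j => (lam j + k j)⁻¹) with hD'
    set E : Matrix (Fin p) (Fin p) ℝ := Matrix.diagonal (fun j => lam j + 2 * k j) with hEd
    have hM : Xᵀ * X + Γ * Matrix.diagonal k * Γᵀ = Γ * D * Γᵀ := by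
      rw [hdec, hD]
      have : Matrix.diagonal (fun j => lam j + k j) =
          Matrix.diagonal lam + Matrix.diagonal k := by
        rw [Matrix.diagonal_add]
      rw [this, Matrix.mul_add, Matrix.add_mul]
    have hDD' : D * D' = 1 := by
      rw [hD, hD', Matrix.diagonal_mul_diagonal]
      rw [show (fun j => (lam j + k j) * (lam j + k j)⁻¹) = fun _ => (1 : ℝ) from
        funext fun j => mul_inv_cancel₀ (hne j), Matrix.diagonal_one]
    have hinv : (Γ * D * Γᵀ)⁻¹ = Γ * D' * Γᵀ := by
      apply Matrix.inv_eq_right_inv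
      calc (Γ * D * Γᵀ) * (Γ * D' * Γᵀ) = Γ * (D * (Γᵀ * Γ) * D') * Γᵀ := by
            simp only [Matrix.mul_assoc]
        _ = 1 := by rw [hΓ', Matrix.mul_one, hDD', Matrix.mul_one, hΓ]
    have hE : Xᵀ * X + (2 : ℝ) • (Γ * Matrix.diagonal k * Γᵀ) = Γ * E * Γᵀ := by
      rw [hdec, hEd]
      have h2 : (2 : ℝ) • (Γ * Matrix.diagonal k * Γᵀ) =
          Γ * Matrix.diagonal (fun j => 2 * k j) * Γᵀ := by
        rw [show Matrix.diagonal (fun j => 2 * k j) = (2 : ℝ) • Matrix.diagonal k by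
          rw [← Matrix.diagonal_smul]; rfl]
        simp [Matrix.mul_smul, Matrix.smul_mul]
      rw [h2]
      have : Matrix.diagonal (fun j => lam j + 2 * k j) =
          Matrix.diagonal lam + Matrix.diagonal (fun j => 2 * k j) := by
        rw [Matrix.diagonal_add]
      rw [this, Matrix.mul_add, Matrix.add_mul]
    set w : Fin p → ℝ := fun j => (lam j + k j)⁻¹ * δ j with hw
    have hβ : betaK k = Γ *ᵥ w := by
      rw [hbetaK, hM, hinv, ← Matrix.mulVec_mulVec, ← Matrix.mulVec_mulVec, ← hδ]
      have : D' *ᵥ δ = w := funext fun j => Matrix.mulVec_diagonal _ _ _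
      rw [this]
    rw [hβ, hE]
    have step1 : (Γ * E * Γᵀ) *ᵥ (Γ *ᵥ w) = Γ *ᵥ (E *ᵥ w) := by
      rw [Matrix.mulVec_mulVec, Matrix.mul_assoc (Γ * E) Γᵀ Γ, hΓ', Matrix.mul_one,
        ← Matrix.mulVec_mulVec]
    have step2 : (Γ *ᵥ w) ⬝ᵥ (Γ *ᵥ (E *ᵥ w)) = w ⬝ᵥ (E *ᵥ w) := by
      rw [Matrix.dotProduct_mulVec, ← Matrix.mulVec_transpose, Matrix.mulVec_mulVec, hΓ',
        Matrix.one_mulVec]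
    rw [step1, step2]
    simp only [hEd, dotProduct, Matrix.mulVec_diagonal, hw]
    refine Finset.sum_congr rfl fun j _ => ?_
    field_simp
  · have hterm : ∀ j : Fin p, Tendsto
        (fun k : Fin p → ℝ => δ j ^ 2 * (lam j + 2 * k j) / (lam j + k j) ^ 2)
        atTop (nhds 0) := by
      intro j
      have heval : Tendsto (fun k : Fin p → ℝ => k j) atTop atTop :=
        tendsto_atTop_atTop_of_monotone (fun a b hab => hab j)
          (fun b => ⟨fun _ => b, le_refl b⟩)
      have hg : Tendsto (fun t : ℝ => δ j ^ 2 * (lam j + 2 * t) / (lam j + t) ^ 2)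
          atTop (nhds 0) := by
        have hub : Tendsto (fun t : ℝ => 2 * δ j ^ 2 / (lam j + t)) atTop (nhds 0) :=
          Tendsto.div_atTop tendsto_const_nhds
            (tendsto_atTop_add_const_left _ (lam j) tendsto_id)
        refine squeeze_zero' ?_ ?_ hub
        · filter_upwards [eventually_ge_atTop (0 : ℝ)] with t ht
          have h1 := hlam j
          apply div_nonneg (by nlinarith [sq_nonneg (δ j)]) (by positivity)
        · filter_upwards [eventually_ge_atTop (0 : ℝ)] with t ht
          have h1 := hlam j
          have h2 : (0 : ℝ) < lam j + t := by linarith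
          rw [div_le_div_iff₀ (by positivity) h2]
          nlinarith [mul_nonneg (mul_nonneg (sq_nonneg (δ j)) h2.le) h1.le]
      exact hg.comp heval
    have hsum : Tendsto (fun k : Fin p → ℝ =>
        ∑ j, δ j ^ 2 * (lam j + 2 * k j) / (lam j + k j) ^ 2) atTop (nhds 0) := by
      have := tendsto_finset_sum (Finset.univ : Finset (Fin p)) (fun j _ => hterm j)
      simpa using this
    simpa using hsum.div_const (Y ⬝ᵥ Y)
end
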